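/- Consider the arrangement of two closed curves on S^2 intersecting in 2k points (k ≥ 0), whose intersection poset P has rank 3 with 2 atoms (the curves) and k coatoms (the point pairs), every coatom covering every atom. Then Ψ(P) = (a+b)(a + (k−1)b), and the cd-index of the induced stratification T is Ψ(T) = ω(a·Ψ(P))* = c^3 + 2(k−1)·dc + 2k·cd. -/

import Mathlib

open scoped TensorProduct
open scoped Classical

noncomputable section

abbrev Alg : Type := MonoidAlgebra ℤ (FreeMonoid Bool)

def va : Alg := MonoidAlgebra.of ℤ (FreeMonoid Bool) (FreeMonoid.of false)
def vb : Alg := MonoidAlgebra.of ℤ (FreeMonoid Bool) (FreeMonoid.of true)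

def monoOf (l : List Bool) : Alg := MonoidAlgebra.of ℤ (FreeMonoid Bool) (FreeMonoid.ofList l)

def toF (x : Alg) : FreeMonoid Bool →₀ ℤ := x.coeff

/-- The weight of a chain encoded as a strictly increasing map `f : Fin (k+1) → P`. -/
def wtChain {P : Type} (ρ : P → ℕ) {k : ℕ} (f : Fin (k+1) → P) : Alg :=
  (List.ofFn (fun i : Fin k =>
    (va - vb) ^ (ρ (f i.succ) - ρ (f i.castSucc) - 1) *
      (if (i : ℕ) + 1 < k then vb else 1))).prod

def zetaChain {P : Type} (zb : P → P → ℤ) {k : ℕ} (f : Fin (k+1) → P) : ℤ :=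
  ∏ i : Fin k, zb (f i.castSucc) (f i.succ)

/-- The ab-index of the interval `[lo, hi]` of a quasi-graded poset `(P, ρ, zb)`. -/
def PsiI {P : Type} [Fintype P] [PartialOrder P] (ρ : P → ℕ) (zb : P → P → ℤ)
    (lo hi : P) : Alg :=
  ∑ k ∈ Finset.range (Fintype.card P + 1),
    ∑ f : Fin (k+1) → P,
      if StrictMono f ∧ f 0 = lo ∧ f (Fin.last k) = hi
      then zetaChain zb f • wtChain ρ f else 0

/-- The algebra map `κ` with `κ(a) = a - b`, `κ(b) = 0`. -/
def kappa : Alg →ₐ[ℤ] Alg :=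
  MonoidAlgebra.lift ℤ Alg (FreeMonoid Bool)
    (FreeMonoid.lift (fun s => if s then 0 else va - vb))

/-- The algebra map `λ̄` with `λ̄(a) = 0`, `λ̄(b) = a - b`. -/
def lambdabar : Alg →ₐ[ℤ] Alg :=
  MonoidAlgebra.lift ℤ Alg (FreeMonoid Bool)
    (FreeMonoid.lift (fun s => if s then va - vb else 0))

/-- `η` on monomials: `b^m a^k ↦ 2 (a-b)^(m+k)`, other monomials to `0`. -/
def etaMon (w : FreeMonoid Bool) : Alg :=
  if ∃ m k : ℕ, FreeMonoid.toList w = List.replicate m true ++ List.replicate k false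
  then (2 : ℤ) • (va - vb) ^ (FreeMonoid.toList w).length else 0

def etaOp (x : Alg) : Alg := (toF x).sum fun w c => c • etaMon w

/-- The letter-deletion coproduct on `Z⟨a,b⟩`. -/
def Delta (x : Alg) : Alg ⊗[ℤ] Alg :=
  (toF x).sum fun w c => c •
    ∑ i ∈ Finset.range (FreeMonoid.toList w).length,
      monoOf ((FreeMonoid.toList w).take i) ⊗ₜ[ℤ] monoOf ((FreeMonoid.toList w).drop (i+1))

/-- The Sweedler-style convolution `x ↦ Σ F(x₍₁₎) · b · G(x₍₂₎)`. -/
def sweedler (F G : Alg → Alg) (x : Alg) : Alg :=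
  (toF x).sum fun w c => c •
    ∑ i ∈ Finset.range (FreeMonoid.toList w).length,
      F (monoOf ((FreeMonoid.toList w).take i)) * vb *
        G (monoOf ((FreeMonoid.toList w).drop (i+1)))

/-- `phiAux n = φ_{n+1}`, defined by `φ₁ = κ` and `φ_{k+1}(w) = Σ φ_k(w₍₁₎) · b · η(w₍₂₎)`. -/
def phiAux : ℕ → Alg → Alg
  | 0 => fun x => kappa x
  | (n+1) => fun x => sweedler (phiAux n) etaOp x

def maxLen (x : Alg) : ℕ := (toF x).support.sup fun w => (FreeMonoid.toList w).length

/-- The operator `φ = Σ_{k ≥ 1} φ_k` (the sum is finite on any given polynomial). -/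
def phi (x : Alg) : Alg := ∑ k ∈ Finset.range (maxLen x + 1), phiAux k x

/-- `ω` on a monomial: replace each occurrence of `ab` by `2d` and remaining letters by `c`. -/
def omegaList : List Bool → Alg
  | [] => 1
  | false :: true :: rest => ((2:ℤ) • (va * vb + vb * va)) * omegaList rest
  | _ :: rest => (va + vb) * omegaList rest

def omegaOp (x : Alg) : Alg := (toF x).sum fun w c => c • omegaList (FreeMonoid.toList w)

/-- The operator `G(w) = φ(w)·b + Σ φ(w₍₁₎)·b·λ̄(w₍₂₎)·(a-b)`. -/
def Gop (w : Alg) : Alg := phi w * vb + sweedler phi (fun y => lambdabar y) w * (va - vb)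

/-- The reversal map `u ↦ u*` reading each monomial backwards. -/
def revOp (x : Alg) : Alg :=
  (toF x).sum fun w c =>
    MonoidAlgebra.single (FreeMonoid.ofList (FreeMonoid.toList w).reverse) c

/-- `H'` deletes the last letter of each monomial, `H'(1) = 0`. -/
def Hp (x : Alg) : Alg :=
  (toF x).sum fun w c => if w = 1 then 0 else c • monoOf ((FreeMonoid.toList w).dropLast)

end
/-- The proper part of the intersection poset: two atoms (the curves) and `k`
coatoms (the point pairs). -/
inductive Mid (k : ℕ) where
  | atom : Bool → Mid k
  | coatom : Fin k → Mid k
deriving DecidableEq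

instance {k : ℕ} : PartialOrder (Mid k) where
  le x y := x = y ∨ ∃ s j, x = Mid.atom s ∧ y = Mid.coatom j
  le_refl x := Or.inl rfl
  le_trans x y z h1 h2 := by
    rcases h1 with rfl | ⟨s, j, rfl, rfl⟩
    · exact h2
    · rcases h2 with rfl | ⟨s', j', h, _⟩
      · exact Or.inr ⟨s, j, rfl, rfl⟩
      · exact absurd h (by simp)
  le_antisymm x y h1 h2 := by
    rcases h1 with rfl | ⟨s, j, rfl, rfl⟩
    · rfl
    · rcases h2 with h | ⟨s', j', h, _⟩
      · exact h.symm
      · exact absurd h (by simp)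

instance {k : ℕ} : Fintype (Mid k) :=
  Fintype.ofEquiv (Bool ⊕ Fin k)
    { toFun := fun p => p.elim Mid.atom Mid.coatom
      invFun := fun x => match x with
        | .atom s => .inl s
        | .coatom j => .inr j
      left_inv := by rintro (s | j) <;> rfl
      right_inv := by rintro (s | j) <;> rfl }

/-- The rank-3 intersection poset with 2 atoms and `k` coatoms, every coatom
covering every atom. -/
abbrev CurvePoset (k : ℕ) : Type := WithBot (WithTop (Mid k))

instance {k : ℕ} : Fintype (CurvePoset k) :=
  inferInstanceAs (Fintype (Option (Option (Mid k))))

def curveRank (k : ℕ) : CurvePoset k → ℕ :=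
  WithBot.recBotCoe 0 (WithTop.recTopCoe 3
    (fun z => match z with | .atom _ => 1 | .coatom _ => 2))

/-!
Chains `lo = x₀ < ⋯ < xₙ = hi` are enumerated by splitting off their first step `lo < x₁`,
which turns the chain sum defining `Ψ` into a recursion in the lower endpoint. A strictly
monotone rank bounds the number of steps by `ρ hi - ρ lo`, so in the curve poset only the chain
`⊥ < ⊤`, the `2 + k` chains through one middle element and the `2k` chains through an atom and a
coatom contribute: `(a-b)² + 2b(a-b) + k(a-b)b + 2kb² = (a+b)(a+(k-1)b)`.

Then `a·Ψ(P) = aaa + (k-1)aab + aba + (k-1)abb`, which `ω` sends to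
`c³ + 2(k-1)cd + 2dc + 2(k-1)dc`. Reversal is an anti-automorphism fixing `a` and `b`, hence
`c` and `d`, so it only swaps `cd` and `dc`.
-/

namespace WithBotTop

variable {ι : Type*} [LT ι]

@[simp] lemma bot_lt_coe (a : ι) : (⊥ : WithBotTop ι) < a := WithBot.bot_lt_coe _

@[simp] lemma coe_lt_top (a : ι) : (a : WithBotTop ι) < ⊤ :=
  WithBot.coe_lt_coe.2 (WithTop.coe_lt_top a)

end WithBotTop

section Chains

variable {P : Type} (ρ : P → ℕ) (zb : P → P → ℤ)

lemma wtChain_vecCons {n : ℕ} (x : P) (g : Fin (n + 2) → P) :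
    wtChain ρ (Matrix.vecCons x g) = (va - vb) ^ (ρ (g 0) - ρ x - 1) * vb * wtChain ρ g := by
  simp [wtChain, List.ofFn_succ, mul_assoc]

lemma zetaChain_vecCons {n : ℕ} (x : P) (g : Fin (n + 1) → P) :
    zetaChain zb (Matrix.vecCons x g) = zb x (g 0) * zetaChain zb g := by
  simp [zetaChain, Fin.prod_univ_succ]

lemma sum_fin_succ_pi [Fintype P] {M : Type} [AddCommMonoid M] {n : ℕ}
    (F : (Fin (n + 1) → P) → M) :
    ∑ f, F f = ∑ x, ∑ g : Fin n → P, F (Matrix.vecCons x g) := by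
  rw [← Fintype.sum_prod_type' (fun x g => F (Matrix.vecCons x g))]
  exact (Fintype.sum_equiv (Fin.consEquiv fun _ => P) _ _ fun _ => rfl).symm

lemma StrictMono.apply_zero_add_val_le {n : ℕ} {g : Fin (n + 1) → ℕ} (hg : StrictMono g)
    (i : Fin (n + 1)) : g 0 + i ≤ g i := by
  induction i using Fin.induction with
  | zero => simp
  | succ i ih =>
    have := hg (Fin.castSucc_lt_succ (i := i))
    simp only [Fin.val_castSucc, Fin.val_succ] at ih ⊢
    omega

variable [Fintype P] [PartialOrder P]

noncomputable def chainSum (lo hi : P) (n : ℕ) : Alg :=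
  ∑ f : Fin (n + 1) → P,
    if StrictMono f ∧ f 0 = lo ∧ f (Fin.last n) = hi then zetaChain zb f • wtChain ρ f else 0

lemma chainSum_zero_of_ne {lo hi : P} (h : lo ≠ hi) : chainSum ρ zb lo hi 0 = 0 :=
  Finset.sum_eq_zero fun _ _ => if_neg fun ⟨_, h0, hl⟩ => h (h0.symm.trans hl)

lemma chainSum_one (lo hi : P) : chainSum ρ zb lo hi 1 =
    if lo < hi then zb lo hi • (va - vb) ^ (ρ hi - ρ lo - 1) else 0 := by
  rw [chainSum, Fintype.sum_eq_single ![lo, hi]]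
  · simp [zetaChain, wtChain]
  · intro f hf
    refine if_neg fun ⟨_, h0, hl⟩ => hf ?_
    ext i
    fin_cases i
    exacts [h0, hl]

lemma chainSum_succ_succ (lo hi : P) (n : ℕ) :
    chainSum ρ zb lo hi (n + 2) = ∑ x, if lo < x then
      zb lo x • ((va - vb) ^ (ρ x - ρ lo - 1) * vb * chainSum ρ zb x hi (n + 1)) else 0 := by
  simp only [chainSum, Finset.mul_sum, Finset.smul_sum, Finset.ite_sum_zero]
  rw [sum_fin_succ_pi, Finset.sum_comm]
  conv_rhs => rw [Finset.sum_comm]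
  refine Finset.sum_congr rfl fun g _ => ?_
  simp only [strictMono_vecCons, Matrix.cons_val_zero, ← Fin.succ_last, Matrix.cons_val_succ,
    zetaChain_vecCons, wtChain_vecCons]
  rw [Fintype.sum_eq_single lo (fun x hx => if_neg fun h => hx h.2.1),
    Fintype.sum_eq_single (g 0) (fun x hx => by simp [Ne.symm hx])]
  split_ifs <;> simp_all [mul_smul, -zsmul_eq_mul]

lemma chainSum_eq_zero_of_lt (hρ : StrictMono ρ) {lo hi : P} {n : ℕ} (hn : ρ hi - ρ lo < n) :
    chainSum ρ zb lo hi n = 0 := by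
  refine Finset.sum_eq_zero fun f _ => if_neg ?_
  rintro ⟨hf, rfl, rfl⟩
  have := (hρ.comp hf).apply_zero_add_val_le (Fin.last n)
  simp only [Function.comp_apply, Fin.val_last] at this
  omega

lemma PsiI_eq_sum_range (hρ : StrictMono ρ) (lo hi : P) {N : ℕ} (hN : ρ hi - ρ lo < N)
    (hNP : N ≤ Fintype.card P + 1) :
    PsiI ρ zb lo hi = ∑ n ∈ Finset.range N, chainSum ρ zb lo hi n := by
  refine (Finset.sum_subset (Finset.range_subset_range.2 hNP) fun n _ hn => ?_).symm
  exact chainSum_eq_zero_of_lt ρ zb hρ (by simp at hn; omega)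

end Chains

namespace Mid

variable {k : ℕ}

@[simp] lemma atom_lt_coatom (s : Bool) (j : Fin k) : atom s < coatom j :=
  lt_of_le_of_ne (Or.inr ⟨s, j, rfl, rfl⟩) (by simp)

@[simp] lemma not_lt_atom (x : Mid k) (s : Bool) : ¬x < atom s := by
  intro h
  rcases h.le with h' | ⟨_, _, _, h'⟩
  · exact h.ne h'
  · simp at h'

@[simp] lemma not_coatom_lt (j : Fin k) (y : Mid k) : ¬coatom j < y := by
  intro h
  rcases h.le with h' | ⟨_, _, h', _⟩
  · exact h.ne h'
  · simp at h'

lemma sum_univ {M : Type} [AddCommMonoid M] (f : Mid k → M) :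
    ∑ x, f x = ∑ s, f (atom s) + ∑ j, f (coatom j) :=
  (Finset.sum_map Finset.univ _ f).trans (Fintype.sum_sum_type _)

end Mid

section CurvePoset

variable {k : ℕ}

lemma sum_curvePoset {M : Type} [AddCommMonoid M] (f : CurvePoset k → M) :
    ∑ x, f x =
      f ⊥ + f ⊤ + ∑ s, f (Mid.atom s : Mid k) + ∑ j, f (Mid.coatom j : Mid k) := by
  have hbot : ∑ x, f x = f ⊥ + ∑ y : WithTop (Mid k), f y :=
    Fintype.sum_option (α := WithTop (Mid k)) f
  have htop : ∑ y : WithTop (Mid k), f y = f ⊤ + ∑ m : Mid k, f m :=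
    Fintype.sum_option (α := Mid k) fun y : WithTop (Mid k) => f y
  rw [hbot, htop, Mid.sum_univ, add_assoc, add_assoc]

@[simp] lemma curveRank_bot : curveRank k ⊥ = 0 := rfl
@[simp] lemma curveRank_top : curveRank k ⊤ = 3 := rfl
@[simp] lemma curveRank_atom (s : Bool) : curveRank k (Mid.atom s : Mid k) = 1 := rfl
@[simp] lemma curveRank_coatom (j : Fin k) : curveRank k (Mid.coatom j : Mid k) = 2 := rfl

lemma curveRank_strictMono : StrictMono (curveRank k) := by
  intro x y h
  induction x using WithBotTop.rec <;> induction y using WithBotTop.rec <;>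
    first | exact absurd h (lt_irrefl _) | simp_all
  · rename_i m
    cases m <;> simp
  · rename_i m m'
    cases m <;> cases m' <;> simp_all
  · rename_i m
    cases m <;> simp

lemma card_curvePoset : Fintype.card (CurvePoset k) = k + 4 := by
  rw [Fintype.card_eq_sum_ones, sum_curvePoset]
  simp
  omega

lemma chainSum_curvePoset_one :
    chainSum (curveRank k) (fun _ _ => (1 : ℤ)) ⊥ ⊤ 1 = (va - vb) ^ 2 := by
  simp [chainSum_one]

lemma chainSum_curvePoset_two :
    chainSum (curveRank k) (fun _ _ => (1 : ℤ)) ⊥ ⊤ 2 =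
      2 • (vb * (va - vb)) + k • ((va - vb) * vb) := by
  simp [chainSum_succ_succ, chainSum_one, sum_curvePoset, -nsmul_eq_mul, two_nsmul]

lemma chainSum_curvePoset_three :
    chainSum (curveRank k) (fun _ _ => (1 : ℤ)) ⊥ ⊤ 3 = (2 * k) • (vb * vb) := by
  simp [chainSum_succ_succ, chainSum_one, sum_curvePoset, -nsmul_eq_mul, mul_nsmul']

lemma PsiI_curvePoset :
    PsiI (curveRank k) (fun _ _ => (1 : ℤ)) ⊥ ⊤ =
      (va + vb) * (va + ((k : ℤ) - 1) • vb) := by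
  rw [PsiI_eq_sum_range _ _ curveRank_strictMono ⊥ ⊤ (N := 4) (by simp)
      (by simp [card_curvePoset]),
    Finset.sum_range_succ, Finset.sum_range_succ, Finset.sum_range_succ, Finset.sum_range_one,
    chainSum_zero_of_ne _ _ bot_lt_top.ne, chainSum_curvePoset_one, chainSum_curvePoset_two,
    chainSum_curvePoset_three]
  simp only [mul_add, add_mul, mul_sub, sub_mul, pow_two, mul_smul_comm]
  module

end CurvePoset

lemma monoOf_append (l l' : List Bool) : monoOf (l ++ l') = monoOf l * monoOf l' :=
  map_mul (MonoidAlgebra.of ℤ (FreeMonoid Bool)) _ _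

lemma va_eq_monoOf : va = monoOf [false] := rfl

lemma vb_eq_monoOf : vb = monoOf [true] := rfl

lemma omegaOp_eq_linearCombination (x : Alg) :
    omegaOp x = Finsupp.linearCombination ℤ (fun w => omegaList (FreeMonoid.toList w)) x.coeff :=
  (Finsupp.linearCombination_apply ℤ _).symm

lemma omegaOp_add (x y : Alg) : omegaOp (x + y) = omegaOp x + omegaOp y := by
  simp only [omegaOp_eq_linearCombination, MonoidAlgebra.coeff_add, map_add]

lemma omegaOp_zsmul (n : ℤ) (x : Alg) : omegaOp (n • x) = n • omegaOp x := by
  simp only [omegaOp_eq_linearCombination, MonoidAlgebra.coeff_smul, map_zsmul]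

lemma omegaOp_monoOf (l : List Bool) : omegaOp (monoOf l) = omegaList l := by
  simp [omegaOp_eq_linearCombination, monoOf]

lemma omegaOp_va_mul (t : ℤ) : omegaOp (va * ((va + vb) * (va + t • vb))) =
    (va + vb) ^ 3 + (2 * t) • ((va + vb) * (va * vb + vb * va))
      + (2 * t + 2) • ((va * vb + vb * va) * (va + vb)) := by
  have hmonomials : va * ((va + vb) * (va + t • vb)) = monoOf [false, false, false]
      + t • monoOf [false, false, true] + monoOf [false, true, false]
      + t • monoOf [false, true, true] := by
    simp only [va_eq_monoOf, vb_eq_monoOf, mul_add, add_mul, mul_smul_comm, ← monoOf_append,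
      List.cons_append, List.nil_append]
    module
  rw [hmonomials]
  simp only [omegaOp_add, omegaOp_zsmul, omegaOp_monoOf, omegaList]
  simp only [mul_add, add_mul, smul_mul_assoc, mul_smul_comm, smul_add, mul_assoc, pow_succ,
    pow_zero, one_mul, mul_one]
  module

lemma revOp_eq_mapDomain (x : Alg) : revOp x = MonoidAlgebra.mapDomain FreeMonoid.reverse x := by
  conv_rhs => rw [← MonoidAlgebra.sum_coeff_single x]
  rw [MonoidAlgebra.mapDomain_sum]
  simp only [MonoidAlgebra.mapDomain_single]
  rfl

lemma revOp_add (x y : Alg) : revOp (x + y) = revOp x + revOp y := by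
  simp only [revOp_eq_mapDomain, MonoidAlgebra.mapDomain_add]

lemma revOp_zsmul (n : ℤ) (x : Alg) : revOp (n • x) = n • revOp x := by
  simp only [revOp_eq_mapDomain, MonoidAlgebra.mapDomain_smul]

lemma revOp_mul (x y : Alg) : revOp (x * y) = revOp y * revOp x := by
  simp only [revOp_eq_mapDomain]
  induction x using MonoidAlgebra.induction_linear with
  | zero => simp
  | add x x' hx hx' => simp only [add_mul, mul_add, MonoidAlgebra.mapDomain_add, hx, hx']
  | single m r =>
    induction y using MonoidAlgebra.induction_linear with
    | zero => simp
    | add y y' hy hy' => simp only [add_mul, mul_add, MonoidAlgebra.mapDomain_add, hy, hy']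
    | single m' r' =>
      simp only [MonoidAlgebra.single_mul_single, MonoidAlgebra.mapDomain_single,
        FreeMonoid.reverse_mul, mul_comm r]

lemma revOp_va : revOp va = va := by
  simp [revOp_eq_mapDomain, va]

lemma revOp_vb : revOp vb = vb := by
  simp [revOp_eq_mapDomain, vb]

lemma revOp_cd (x y : ℤ) :
    revOp ((va + vb) ^ 3 + x • ((va + vb) * (va * vb + vb * va))
      + y • ((va * vb + vb * va) * (va + vb))) =
    (va + vb) ^ 3 + x • ((va * vb + vb * va) * (va + vb))
      + y • ((va + vb) * (va * vb + vb * va)) := by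
  simp only [revOp_add, revOp_zsmul, revOp_mul, pow_three, revOp_va, revOp_vb]
  rw [add_comm (vb * va), mul_assoc]

/-- for the intersection poset `P` of two closed curves on `S²`
meeting in `2k` points (2 atoms, `k` coatoms, full covering relations),
`Ψ(P) = (a+b)(a+(k-1)b)` and `ω(a·Ψ(P))* = c³ + 2(k-1)·dc + 2k·cd`. -/
theorem two_curves_on_sphere (k : ℕ) :
    PsiI (curveRank k) (fun _ _ => (1 : ℤ)) ⊥ ⊤
        = (va + vb) * (va + ((k : ℤ) - 1) • vb) ∧
      revOp (omegaOp (va * PsiI (curveRank k) (fun _ _ => (1 : ℤ)) ⊥ ⊤))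
        = (va + vb) ^ 3 + (2 * ((k : ℤ) - 1)) • ((va * vb + vb * va) * (va + vb))
            + (2 * (k : ℤ)) • ((va + vb) * (va * vb + vb * va)) := by
  refine ⟨PsiI_curvePoset, ?_⟩
  rw [PsiI_curvePoset, omegaOp_va_mul, revOp_cd, show 2 * ((k : ℤ) - 1) + 2 = 2 * k by ring]
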